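/- arXiv:2103.07238 — 4 statements merged into one kernel-verified Lean document; each statement's English description precedes it below -/
import Mathlib

section
/- Let f be a holomorphic map of the unit disc 𝔻 into its closure with ‖f‖_∞ ≤ 1, with f(0)=0, and which is not a rotation. Then for every 0 < r < 1 there exists a constant 0 < c = c(r,f) < 1 such that 1 − |z| ≤ c (1 − |f(z)|) for all z ∈ 𝔻 with |z| ≥ r. In fact one may take c = (1+|f'(0)| r)/(1+r). -/
/-!
Write `f z = z g(z)` with `g = dslope f 0`. By the Schwarz lemma `g` maps `𝔻` into the closed
disc, and into `𝔻` itself because `f` is not a rotation; moreover `g 0 = f'(0)`, so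
`a := |f'(0)| < 1`. The Schwarz–Pick lemma for `g` gives `|g z| ≤ (|z| + a) / (1 + a |z|)`, hence
`1 - |f z| ≥ (1 - |z|²) / (1 + a |z|)`, that is `1 - |z| ≤ (1 + a |z|) / (1 + |z|) · (1 - |f z|)`,
and the factor `(1 + a s) / (1 + s)` is decreasing in `s`.
-/

open MeasureTheory Complex Metric Set Filter Topology

noncomputable section

/-- Normalized Lebesgue measure on the unit circle, via the parametrization `θ ↦ exp (θ * I)`
of `∂𝔻` by `θ ∈ (0, 2π]`. -/
def circleMeasure : Measure ℝ :=
  (ENNReal.ofReal (2 * Real.pi)⁻¹) • (volume.restrict (Set.Ioc (0:ℝ) (2 * Real.pi)))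

/-- The boundary point of the unit circle with angle `θ`. -/
def bpt (θ : ℝ) : ℂ := Complex.exp (θ * Complex.I)

/-- The radial limit of `f` at the boundary point `exp (θ * I)` (a junk value if the limit
does not exist). -/
def radialLimit (f : ℂ → ℂ) (θ : ℝ) : ℂ :=
  limUnder (nhdsWithin (1:ℝ) (Set.Iio 1)) (fun r : ℝ => f (r * bpt θ))

/-- `f` is an inner function: a holomorphic self-map of the unit disc whose radial
limits exist and have modulus one at almost every boundary point. -/
def IsInner (f : ℂ → ℂ) : Prop :=
  DifferentiableOn ℂ f (ball 0 1) ∧ MapsTo f (ball 0 1) (ball 0 1) ∧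
    ∀ᵐ θ ∂circleMeasure,
      Tendsto (fun r : ℝ => f (r * bpt θ)) (nhdsWithin (1:ℝ) (Set.Iio 1))
        (nhds (radialLimit f θ)) ∧ ‖radialLimit f θ‖ = 1

/-- `f` is a rotation of the unit disc: `f z = c z` on `𝔻` for some unimodular `c`. -/
def IsRotation (f : ℂ → ℂ) : Prop :=
  ∃ c : ℂ, ‖c‖ = 1 ∧ ∀ z ∈ ball (0:ℂ) 1, f z = c * z

/-- The Poisson kernel `P(z, exp (θ * I)) = (1 - |z|²) / |exp (θ * I) - z|²`. -/
def pKernel (z : ℂ) (θ : ℝ) : ℝ := (1 - ‖z‖ ^ 2) / ‖bpt θ - z‖ ^ 2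

/-- The function `F = ∑_{n≥1} aₙ fⁿ` (sum of a pointwise convergent series; junk if
it diverges). -/
def seriesFun (f : ℂ → ℂ) (a : ℕ → ℂ) (z : ℂ) : ℂ := ∑' n : ℕ, a (n + 1) * f^[n + 1] z

/-- `f` is a finite Blaschke product (on the unit disc). -/
def IsFiniteBlaschke (f : ℂ → ℂ) : Prop :=
  ∃ (d : ℕ) (c : ℂ) (α : Fin d → ℂ), ‖c‖ = 1 ∧ (∀ k, α k ∈ ball (0:ℂ) 1) ∧
    ∀ z ∈ ball (0:ℂ) 1, f z = c * ∏ k, (z - α k) / (1 - (starRingEnd ℂ) (α k) * z)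

open ComplexConjugate

def mobiusDisc (w u : ℂ) : ℂ := (u - w) / (1 - conj w * u)

lemma normSq_one_sub_conj_mul_sub_normSq_sub (w u : ℂ) :
    normSq (1 - conj w * u) - normSq (u - w) = (1 - normSq w) * (1 - normSq u) := by
  simp only [Complex.normSq_apply, Complex.sub_re, Complex.sub_im, Complex.mul_re, Complex.mul_im,
    Complex.one_re, Complex.one_im, Complex.conj_re, Complex.conj_im]
  ring

lemma one_sub_conj_mul_ne_zero {w u : ℂ} (hw : ‖w‖ ≤ 1) (hu : ‖u‖ < 1) : 1 - conj w * u ≠ 0 := by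
  intro h
  have : ‖conj w * u‖ < 1 := by
    rw [norm_mul, RCLike.norm_conj]
    nlinarith [norm_nonneg u, norm_nonneg w]
  rw [← sub_eq_zero.1 h, norm_one] at this
  exact this.false

lemma mobiusDisc_self (w : ℂ) : mobiusDisc w w = 0 := by simp [mobiusDisc]

lemma differentiableOn_mobiusDisc {w : ℂ} (hw : ‖w‖ ≤ 1) :
    DifferentiableOn ℂ (mobiusDisc w) (ball 0 1) :=
  ((differentiableOn_id.sub_const w).div (differentiableOn_id.const_mul _ |>.const_sub 1))
    fun _ hu => one_sub_conj_mul_ne_zero hw (mem_ball_zero_iff.1 hu)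

lemma mapsTo_mobiusDisc {w : ℂ} (hw : ‖w‖ < 1) : MapsTo (mobiusDisc w) (ball 0 1) (ball 0 1) := by
  intro u hu
  rw [mem_ball_zero_iff] at hu ⊢
  have hden := one_sub_conj_mul_ne_zero hw.le hu
  rw [mobiusDisc, norm_div, div_lt_one (norm_pos_iff.2 hden),
    ← sq_lt_sq₀ (norm_nonneg _) (norm_nonneg _), Complex.sq_norm, Complex.sq_norm, ← sub_pos,
    normSq_one_sub_conj_mul_sub_normSq_sub, normSq_eq_norm_sq, normSq_eq_norm_sq]
  have := pow_lt_one₀ (norm_nonneg w) hw two_ne_zero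
  have := pow_lt_one₀ (norm_nonneg u) hu two_ne_zero
  apply mul_pos <;> linarith

lemma normSq_sub_eq (w u : ℂ) :
    normSq (u - w) = normSq u - 2 * (conj w * u).re + normSq w := by
  simp only [Complex.normSq_apply, Complex.sub_re, Complex.sub_im, Complex.mul_re,
    Complex.conj_re, Complex.conj_im]
  ring

lemma normSq_one_sub_conj_mul_eq (w u : ℂ) :
    normSq (1 - conj w * u) = 1 - 2 * (conj w * u).re + normSq w * normSq u := by
  simp only [Complex.normSq_apply, Complex.sub_re, Complex.sub_im, Complex.mul_re, Complex.mul_im,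
    Complex.one_re, Complex.one_im, Complex.conj_re, Complex.conj_im]
  ring

lemma norm_mul_one_add_le_of_norm_sub_le {w u : ℂ} {s : ℝ} (hs0 : 0 ≤ s) (hs1 : s < 1)
    (hw : ‖w‖ ≤ 1) (h : ‖u - w‖ ≤ s * ‖1 - conj w * u‖) :
    ‖u‖ * (1 + ‖w‖ * s) ≤ s + ‖w‖ := by
  set a := ‖w‖
  set x := ‖u‖
  have hsq : normSq (u - w) ≤ s ^ 2 * normSq (1 - conj w * u) := by
    rw [← Complex.sq_norm, ← Complex.sq_norm, ← mul_pow]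
    exact pow_le_pow_left₀ (norm_nonneg _) h 2
  have hre : (conj w * u).re ≤ a * x := by
    simpa only [norm_mul, RCLike.norm_conj] using Complex.re_le_norm (conj w * u)
  rw [normSq_sub_eq, normSq_one_sub_conj_mul_eq, normSq_eq_norm_sq, normSq_eq_norm_sq] at hsq
  -- squaring `h` gives a quadratic inequality in `x` with roots `(s + a)/(1 + a s)` and
  -- `(a - s)/(1 - a s)`, and the second root is the smaller one
  have hquad : (x * (1 + a * s) - (s + a)) * (x * (1 - a * s) - (a - s)) ≤ 0 := by
    nlinarith [mul_le_mul_of_nonneg_left hre (by nlinarith : (0:ℝ) ≤ 1 - s ^ 2)]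
  have has : a * s < 1 := by nlinarith [norm_nonneg w]
  by_contra! hc
  have : a - s < x * (1 - a * s) := by
    refine lt_of_mul_lt_mul_right (a := 1 + a * s) ?_ (by positivity)
    nlinarith [mul_lt_mul_of_pos_right hc (sub_pos.2 has),
      mul_nonneg hs0 (by nlinarith [norm_nonneg w] : (0:ℝ) ≤ 1 - a ^ 2)]
  nlinarith [mul_pos (sub_pos.2 hc) (sub_pos.2 this)]

/-- The Schwarz–Pick lemma at the origin. -/
theorem norm_mul_one_add_le_of_mapsTo_ball {g : ℂ → ℂ} (hd : DifferentiableOn ℂ g (ball 0 1))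
    (hm : MapsTo g (ball 0 1) (ball 0 1)) {z : ℂ} (hz : z ∈ ball 0 1) :
    ‖g z‖ * (1 + ‖g 0‖ * ‖z‖) ≤ ‖z‖ + ‖g 0‖ := by
  have hg0 : ‖g 0‖ < 1 := mem_ball_zero_iff.1 (hm (mem_ball_self one_pos))
  have hschwarz : ‖mobiusDisc (g 0) (g z)‖ ≤ ‖z‖ :=
    norm_le_norm_of_mapsTo_ball ((differentiableOn_mobiusDisc hg0.le).comp hd hm)
      (((mapsTo_mobiusDisc hg0).comp hm).mono_right ball_subset_closedBall)
      (mobiusDisc_self _) (mem_ball_zero_iff.1 hz)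
  have hden := one_sub_conj_mul_ne_zero hg0.le (mem_ball_zero_iff.1 (hm hz))
  rw [mobiusDisc, norm_div, div_le_iff₀ (norm_pos_iff.2 hden)] at hschwarz
  exact norm_mul_one_add_le_of_norm_sub_le (norm_nonneg z) (mem_ball_zero_iff.1 hz) hg0.le hschwarz

lemma mapsTo_dslope_zero_ball_of_not_isRotation {f : ℂ → ℂ}
    (hd : DifferentiableOn ℂ f (ball 0 1)) (hm : MapsTo f (ball 0 1) (closedBall 0 1))
    (hf0 : f 0 = 0) (hrot : ¬ IsRotation f) : MapsTo (dslope f 0) (ball 0 1) (ball 0 1) := by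
  have hm' : MapsTo f (ball 0 1) (closedBall (f 0) 1) := by rwa [hf0]
  intro z hz
  refine mem_ball_zero_iff.2 <| lt_of_le_of_ne
    (by simpa using norm_dslope_le_div_of_mapsTo_ball hd hm' hz) fun h => hrot ?_
  obtain ⟨c, hc, hf⟩ :=
    affine_of_mapsTo_ball_of_exists_norm_dslope_eq_div' hd hm' ⟨z, hz, by simpa using h⟩
  exact ⟨c, by simpa using hc, fun w hw => by simpa [hf0, mul_comm] using hf hw⟩

lemma one_sub_le_div_mul_one_sub {a r s x : ℝ} (ha0 : 0 ≤ a) (ha1 : a < 1) (hr : 0 ≤ r)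
    (hrs : r ≤ s) (hs1 : s ≤ 1) (hx : x * (1 + a * s) ≤ s * (s + a)) :
    1 - s ≤ (1 + a * r) / (1 + r) * (1 - x) := by
  have hs : 0 < 1 + s := by linarith
  have has : 0 < 1 + a * s := by nlinarith
  have hmono : (1 + a * s) / (1 + s) ≤ (1 + a * r) / (1 + r) := by
    rw [div_le_div_iff₀ (by linarith) (by linarith)]
    nlinarith
  calc 1 - s = (1 + a * s) / (1 + s) * ((1 - s ^ 2) / (1 + a * s)) := by
        rw [div_mul_div_comm, eq_div_iff (by positivity)]
        ring
    _ ≤ (1 + a * r) / (1 + r) * (1 - x) := by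
        gcongr
        · exact div_nonneg (by nlinarith) has.le
        · rw [div_le_iff₀ has]
          nlinarith

theorem statement7_general (f : ℂ → ℂ) (hd : DifferentiableOn ℂ f (ball 0 1))
    (hm : MapsTo f (ball 0 1) (closedBall 0 1)) (hf0 : f 0 = 0) (hrot : ¬ IsRotation f)
    (r : ℝ) (hr0 : 0 < r) :
    0 < (1 + ‖deriv f 0‖ * r) / (1 + r) ∧ (1 + ‖deriv f 0‖ * r) / (1 + r) < 1 ∧
      ∀ z ∈ ball (0:ℂ) 1, r ≤ ‖z‖ →
        1 - ‖z‖ ≤ ((1 + ‖deriv f 0‖ * r) / (1 + r)) * (1 - ‖f z‖) := by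
  set g := dslope f 0
  have hg : MapsTo g (ball 0 1) (ball 0 1) :=
    mapsTo_dslope_zero_ball_of_not_isRotation hd hm hf0 hrot
  have hgd : DifferentiableOn ℂ g (ball 0 1) :=
    (differentiableOn_dslope (isOpen_ball.mem_nhds (mem_ball_self one_pos))).2 hd
  have hg0 : g 0 = deriv f 0 := dslope_same f 0
  have ha1 : ‖deriv f 0‖ < 1 := by simpa [hg0] using hg (mem_ball_self one_pos)
  refine ⟨by positivity, by rw [div_lt_one (by positivity)]; nlinarith, fun z hz hrz => ?_⟩
  have hfz : f z = z * g z := by simpa [hf0] using (sub_smul_dslope f 0 z).symm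
  refine one_sub_le_div_mul_one_sub (norm_nonneg _) ha1 hr0.le hrz (mem_ball_zero_iff.1 hz).le ?_
  rw [hfz, norm_mul, mul_assoc]
  exact mul_le_mul_of_nonneg_left
    (by simpa [hg0] using norm_mul_one_add_le_of_mapsTo_ball hgd hg hz) (norm_nonneg z)

/-- **Lemma 2.1 (a).** Quantitative Denjoy–Wolff estimate: for `0 < r < 1` one has
`1 - |z| ≤ c (1 - |f z|)` for `r ≤ |z|`, with `c = (1 + |f'(0)| r)/(1 + r) ∈ (0,1)`. -/
theorem statement7 (f : ℂ → ℂ) (hd : DifferentiableOn ℂ f (ball 0 1))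
    (hm : MapsTo f (ball 0 1) (closedBall 0 1)) (hf0 : f 0 = 0) (hrot : ¬ IsRotation f)
    (r : ℝ) (hr0 : 0 < r) (hr1 : r < 1) :
    0 < (1 + ‖deriv f 0‖ * r) / (1 + r) ∧ (1 + ‖deriv f 0‖ * r) / (1 + r) < 1 ∧
      ∀ z ∈ ball (0:ℂ) 1, r ≤ ‖z‖ →
        1 - ‖z‖ ≤ ((1 + ‖deriv f 0‖ * r) / (1 + r)) * (1 - ‖f z‖) :=
  statement7_general f hd hm hf0 hrot r hr0
end
end

section
/- Let f be a holomorphic map of the unit disc 𝔻 into its closure with ‖f‖_∞ ≤ 1, with f(0)=0, which is not a rotation, and assume f'(0) ≠ 0. Then there exists 0 < r₀ = r₀(f) < 1 such that for all n ≥ 1 and all z with |z| ≤ r₀ one has |f^n(z)| ≤ r₀^{-1} |f'(0)|^n |z|, where f^n denotes the n-th iterate of f. -/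
open MeasureTheory Complex Metric Set Filter Topology

noncomputable section

/-! Write `f z = z g(z)` with `g = dslope f 0`, so `g 0 = f'(0)`. Schwarz's lemma gives `|g| ≤ 1`,
and applied to `g - f'(0)`, which is bounded by `2`, it gives
`|f z| ≤ (|f'(0)| + 2|z|) |z|`; moreover `|f'(0)| < 1`, since equality in Schwarz's lemma forces
a rotation. Hence on a small disc `|z| ≤ r` the orbit `fⁿ z` decays geometrically, and
`|fⁿ z| ≤ |f'(0)|ⁿ ∏ₖ (1 + C |fᵏ z|) |z| ≤ |f'(0)|ⁿ exp (C' r) |z|`; finally `exp (C' r) ≤ 1/r`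
for small `r`. -/

theorem norm_le_norm_deriv_add_mul_of_mapsTo {E : Type*} [NormedAddCommGroup E] [NormedSpace ℂ E]
    [CompleteSpace E] {f : ℂ → E} (hd : DifferentiableOn ℂ f (ball 0 1))
    (hm : MapsTo f (ball 0 1) (closedBall 0 1)) (hf0 : f 0 = 0) {z : ℂ} (hz : z ∈ ball 0 1) :
    ‖f z‖ ≤ (‖deriv f 0‖ + 2 * ‖z‖) * ‖z‖ := by
  set g := dslope f 0
  have hg_le : ∀ w ∈ ball (0 : ℂ) 1, ‖g w‖ ≤ 1 := fun w hw ↦ by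
    simpa using norm_dslope_le_div_of_mapsTo_ball hd (by rwa [hf0]) hw
  have hgd : DifferentiableOn ℂ g (ball 0 1) :=
    (differentiableOn_dslope (isOpen_ball.mem_nhds (mem_ball_self one_pos))).mpr hd
  have hgm : MapsTo g (ball 0 1) (closedBall (g 0) 2) := fun w hw ↦ by
    rw [mem_closedBall, dist_eq_norm]
    linarith [norm_sub_le (g w) (g 0), hg_le w hw, hg_le 0 (mem_ball_self one_pos)]
  have hg_sub : ‖g z - deriv f 0‖ ≤ 2 * ‖z‖ := by
    simpa [g, dist_eq_norm] using dist_le_div_mul_dist_of_mapsTo_ball hgd hgm hz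
  have hfg : f z = z • g z := by simpa [hf0] using (sub_smul_dslope f 0 z).symm
  calc ‖f z‖ = ‖z‖ * ‖g z‖ := by rw [hfg, norm_smul]
    _ ≤ ‖z‖ * (‖deriv f 0‖ + 2 * ‖z‖) := by
        gcongr
        linarith [norm_le_insert' (g z) (deriv f 0)]
    _ = _ := mul_comm _ _

theorem isRotation_of_norm_deriv_eq_one {f : ℂ → ℂ} (hd : DifferentiableOn ℂ f (ball 0 1))
    (hm : MapsTo f (ball 0 1) (closedBall 0 1)) (hf0 : f 0 = 0) (h : ‖deriv f 0‖ = 1) :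
    IsRotation f := by
  refine ⟨deriv f 0, h, fun z hz ↦ ?_⟩
  have := affine_of_mapsTo_ball_of_norm_dslope_eq_div hd (by rwa [hf0]) (mem_ball_self one_pos)
    (by simpa using h) hz
  simpa [hf0, mul_comm] using this

theorem norm_deriv_lt_one_of_not_isRotation {f : ℂ → ℂ} (hd : DifferentiableOn ℂ f (ball 0 1))
    (hm : MapsTo f (ball 0 1) (closedBall 0 1)) (hf0 : f 0 = 0) (hrot : ¬IsRotation f) :
    ‖deriv f 0‖ < 1 :=
  (norm_deriv_le_one_of_mapsTo_ball hd (by rwa [hf0]) one_pos).lt_of_ne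
    fun h ↦ hrot (isRotation_of_norm_deriv_eq_one hd hm hf0 h)



section Iterate

variable {E : Type*} [SeminormedAddCommGroup E] {f : E → E} {α C r q : ℝ}

theorem norm_iterate_le_pow_mul (hf : ∀ z, ‖z‖ ≤ r → ‖f z‖ ≤ (α + C * ‖z‖) * ‖z‖)
    (hC : 0 ≤ C) (hq : α + C * r ≤ q) (hq₀ : 0 ≤ q) (hq₁ : q ≤ 1) {z : E} (hz : ‖z‖ ≤ r) :
    ∀ n, ‖f^[n] z‖ ≤ q ^ n * ‖z‖
  | 0 => by simp
  | n + 1 => by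
    have ih := norm_iterate_le_pow_mul hf hC hq hq₀ hq₁ hz n
    have hw : ‖f^[n] z‖ ≤ r :=
      ih.trans <| (mul_le_of_le_one_left (norm_nonneg z) (pow_le_one₀ hq₀ hq₁)).trans hz
    calc ‖f^[n + 1] z‖ ≤ (α + C * ‖f^[n] z‖) * ‖f^[n] z‖ := by
          rw [Function.iterate_succ_apply']; exact hf _ hw
      _ ≤ q * (q ^ n * ‖z‖) := by gcongr; linarith [mul_le_mul_of_nonneg_left hw hC]
      _ = q ^ (n + 1) * ‖z‖ := by ring

theorem norm_iterate_le_pow_mul_exp_sum (hf : ∀ z, ‖z‖ ≤ r → ‖f z‖ ≤ (α + C * ‖z‖) * ‖z‖)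
    (hα : 0 < α) (hC : 0 ≤ C) {z : E} (hz : ∀ k, ‖f^[k] z‖ ≤ r) :
    ∀ n, ‖f^[n] z‖ ≤ α ^ n * Real.exp (C / α * ∑ k ∈ Finset.range n, ‖f^[k] z‖) * ‖z‖
  | 0 => by simp
  | n + 1 => by
    have ih := norm_iterate_le_pow_mul_exp_sum hf hα hC hz n
    set w := f^[n] z
    have hstep : α + C * ‖w‖ ≤ α * Real.exp (C / α * ‖w‖) := by
      have := Real.add_one_le_exp (C / α * ‖w‖)
      calc α + C * ‖w‖ = α * (C / α * ‖w‖ + 1) := by field_simp; ring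
        _ ≤ _ := by gcongr
    calc ‖f^[n + 1] z‖ ≤ (α + C * ‖w‖) * ‖w‖ := by
          rw [Function.iterate_succ_apply']; exact hf _ (hz n)
      _ ≤ α * Real.exp (C / α * ‖w‖) *
          (α ^ n * Real.exp (C / α * ∑ k ∈ Finset.range n, ‖f^[k] z‖) * ‖z‖) := by
          gcongr
      _ = _ := by
          rw [Finset.sum_range_succ, mul_add, Real.exp_add, pow_succ]; ring

theorem norm_iterate_le_pow_mul_exp (hf : ∀ z, ‖z‖ ≤ r → ‖f z‖ ≤ (α + C * ‖z‖) * ‖z‖)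
    (hα : 0 < α) (hC : 0 ≤ C) (hq : α + C * r ≤ q) (hq₁ : q < 1) {z : E} (hz : ‖z‖ ≤ r)
    (n : ℕ) : ‖f^[n] z‖ ≤ α ^ n * Real.exp (C * r / (α * (1 - q))) * ‖z‖ := by
  have hr : 0 ≤ r := (norm_nonneg z).trans hz
  have hq₀ : 0 ≤ q := by nlinarith
  have hpow := norm_iterate_le_pow_mul hf hC hq hq₀ hq₁.le hz
  have hsum : ∑ k ∈ Finset.range n, ‖f^[k] z‖ ≤ r / (1 - q) :=
    calc ∑ k ∈ Finset.range n, ‖f^[k] z‖ ≤ ∑ k ∈ Finset.range n, q ^ k * r :=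
          Finset.sum_le_sum fun k _ ↦ (hpow k).trans (by gcongr)
      _ ≤ 1 / (1 - q) * r := by
          rw [← Finset.sum_mul, Finset.range_eq_Ico]
          gcongr
          simpa using geom_sum_Ico_le_of_lt_one hq₀ hq₁ (m := 0) (n := n)
      _ = r / (1 - q) := by ring
  have hexp : C / α * ∑ k ∈ Finset.range n, ‖f^[k] z‖ ≤ C * r / (α * (1 - q)) :=
    calc _ ≤ C / α * (r / (1 - q)) := by gcongr
      _ = _ := by field_simp
  have hzk : ∀ k, ‖f^[k] z‖ ≤ r := fun k ↦
    (hpow k).trans <| (mul_le_of_le_one_left (norm_nonneg z) (pow_le_one₀ hq₀ hq₁.le)).trans hz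
  calc ‖f^[n] z‖ ≤ α ^ n * Real.exp (C / α * ∑ k ∈ Finset.range n, ‖f^[k] z‖) * ‖z‖ :=
        norm_iterate_le_pow_mul_exp_sum hf hα hC hzk n
    _ ≤ _ := by gcongr

end Iterate

/-- **Lemma 2.1 (b).** If moreover `f'(0) ≠ 0`, there is `0 < r₀ < 1` with
`|fⁿ(z)| ≤ r₀⁻¹ |f'(0)|ⁿ |z|` for all `n ≥ 1` and `|z| ≤ r₀`. -/
theorem statement8 (f : ℂ → ℂ) (hd : DifferentiableOn ℂ f (ball 0 1))
    (hm : MapsTo f (ball 0 1) (closedBall 0 1)) (hf0 : f 0 = 0) (hrot : ¬ IsRotation f)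
    (hder : deriv f 0 ≠ 0) :
    ∃ r₀ : ℝ, 0 < r₀ ∧ r₀ < 1 ∧ ∀ n : ℕ, 1 ≤ n → ∀ z : ℂ, ‖z‖ ≤ r₀ →
      ‖f^[n] z‖ ≤ r₀⁻¹ * ‖deriv f 0‖ ^ n * ‖z‖ := by
  set α := ‖deriv f 0‖
  have hα₀ : 0 < α := norm_pos_iff.mpr hder
  obtain ⟨q, hαq, hq₁⟩ := exists_between (norm_deriv_lt_one_of_not_isRotation hd hm hf0 hrot)
  -- all three conditions hold at `r = 0`, hence for small `r > 0`
  have hsmall : ∀ᶠ r in 𝓝[>] (0 : ℝ),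
      r < 1 ∧ α + 2 * r < q ∧ r * Real.exp (2 * r / (α * (1 - q))) < 1 :=
    nhdsWithin_le_nhds ((eventually_lt_nhds one_pos).and ((ContinuousAt.eventually_lt
      (by fun_prop) continuousAt_const (by simpa using hαq)).and (ContinuousAt.eventually_lt
      (by fun_prop) continuousAt_const (by simp))))
  obtain ⟨r₀, ⟨hr₁, hrq, hrexp⟩, hr₀⟩ := (hsmall.and self_mem_nhdsWithin).exists
  refine ⟨r₀, hr₀, hr₁, fun n _ z hz ↦ ?_⟩
  have hf : ∀ w : ℂ, ‖w‖ ≤ r₀ → ‖f w‖ ≤ (α + 2 * ‖w‖) * ‖w‖ := fun w hw ↦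
    norm_le_norm_deriv_add_mul_of_mapsTo hd hm hf0 (mem_ball_zero_iff.mpr (hw.trans_lt hr₁))
  have hexp : Real.exp (2 * r₀ / (α * (1 - q))) ≤ r₀⁻¹ := by
    simpa using (le_inv_mul_iff₀ hr₀ (b := 1)).mpr hrexp.le
  calc ‖f^[n] z‖ ≤ α ^ n * Real.exp (2 * r₀ / (α * (1 - q))) * ‖z‖ :=
        norm_iterate_le_pow_mul_exp hf hα₀ zero_le_two hrq.le hq₁ hz n
    _ ≤ α ^ n * r₀⁻¹ * ‖z‖ := by gcongr
    _ = r₀⁻¹ * α ^ n * ‖z‖ := by ring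
end
end

section
/- Let f be a holomorphic map of the unit disc 𝔻 into its closure with ‖f‖_∞ ≤ 1, with f(0)=0, which is not a rotation. Then there exist constants 0 < r₀ = r₀(f) < 1 and 0 < c₀ = c₀(f) < 1 such that |f^n(z)| ≤ r₀^{-1} c₀^n |z| for every n ≥ 1 and every z with |z| ≤ r₀, where f^n denotes the n-th iterate of f. -/
open MeasureTheory Complex Metric Set Filter Topology

noncomputable section

/-! By the Schwarz lemma `f z = z · g z` with `g = dslope f 0` of modulus `≤ 1` on `𝔻`, and by its
equality case `|g| < 1` everywhere since `f` is not a rotation. On the compact disc `|z| ≤ 1/2` the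
continuous function `|g|` attains a maximum `c₀ < 1`, so `f` contracts that disc by the factor
`c₀` and the iterates satisfy `|fⁿ z| ≤ c₀ⁿ |z|` there. -/

theorem IsCompact.exists_pos_lt_one_forall_norm_le {X E : Type*} [TopologicalSpace X]
    [SeminormedAddCommGroup E] {K : Set X} {g : X → E} (hK : IsCompact K)
    (hg : ContinuousOn g K) (hlt : ∀ x ∈ K, ‖g x‖ < 1) :
    ∃ c : ℝ, 0 < c ∧ c < 1 ∧ ∀ x ∈ K, ‖g x‖ ≤ c := by
  rcases K.eq_empty_or_nonempty with rfl | hne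
  · exact ⟨1 / 2, by norm_num, by norm_num, by simp⟩
  obtain ⟨x₀, hx₀, hmax⟩ := hK.exists_isMaxOn hne hg.norm
  exact ⟨max ‖g x₀‖ (1 / 2), lt_max_of_lt_right (by norm_num),
    max_lt (hlt x₀ hx₀) (by norm_num), fun x hx => (hmax hx).trans (le_max_left _ _)⟩

theorem norm_le_mul_norm_of_norm_dslope_le {E : Type*} [NormedAddCommGroup E] [NormedSpace ℂ E]
    {f : ℂ → E} {z : ℂ} {c : ℝ} (hf0 : f 0 = 0) (hc : ‖dslope f 0 z‖ ≤ c) :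
    ‖f z‖ ≤ c * ‖z‖ := by
  have hfz : z • dslope f 0 z = f z := by simpa [hf0] using sub_smul_dslope f 0 z
  rw [← hfz, norm_smul, mul_comm]
  gcongr

theorem norm_dslope_lt_one_of_not_isRotation {f : ℂ → ℂ} {z : ℂ}
    (hd : DifferentiableOn ℂ f (ball 0 1)) (hm : MapsTo f (ball 0 1) (closedBall 0 1))
    (hf0 : f 0 = 0) (hrot : ¬ IsRotation f) (hz : z ∈ ball (0 : ℂ) 1) :
    ‖dslope f 0 z‖ < 1 := by
  have hm' : MapsTo f (ball 0 1) (closedBall (f 0) 1) := by rwa [hf0]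
  refine lt_of_le_of_ne (by simpa using norm_dslope_le_div_of_mapsTo_ball hd hm' hz) fun h => ?_
  refine hrot ⟨dslope f 0 z, h, fun w hw => ?_⟩
  simpa [hf0, mul_comm] using
    affine_of_mapsTo_ball_of_norm_dslope_eq_div hd hm' hz (by simpa using h) hw

theorem norm_iterate_le_pow_mul_norm {E : Type*} [SeminormedAddCommGroup E] {f : E → E}
    {c r : ℝ} (hc0 : 0 ≤ c) (hc1 : c ≤ 1) (hf : ∀ z, ‖z‖ ≤ r → ‖f z‖ ≤ c * ‖z‖) (n : ℕ)
    {z : E} (hz : ‖z‖ ≤ r) : ‖f^[n] z‖ ≤ c ^ n * ‖z‖ := by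
  induction n with
  | zero => simp
  | succ n ih =>
    have hr : ‖f^[n] z‖ ≤ r :=
      ih.trans (le_trans (mul_le_of_le_one_left (norm_nonneg z) (pow_le_one₀ hc0 hc1)) hz)
    calc ‖f^[n + 1] z‖ = ‖f (f^[n] z)‖ := by rw [Function.iterate_succ_apply']
      _ ≤ c * ‖f^[n] z‖ := hf _ hr
      _ ≤ c * (c ^ n * ‖z‖) := by gcongr
      _ = c ^ (n + 1) * ‖z‖ := by ring

/-- **Corollary 2.2.** There are `0 < r₀ < 1` and `0 < c₀ < 1` such that
`|fⁿ(z)| ≤ r₀⁻¹ c₀ⁿ |z|` for all `n ≥ 1` and `|z| ≤ r₀`. -/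
theorem statement10 (f : ℂ → ℂ) (hd : DifferentiableOn ℂ f (ball 0 1))
    (hm : MapsTo f (ball 0 1) (closedBall 0 1)) (hf0 : f 0 = 0) (hrot : ¬ IsRotation f) :
    ∃ r₀ c₀ : ℝ, 0 < r₀ ∧ r₀ < 1 ∧ 0 < c₀ ∧ c₀ < 1 ∧
      ∀ n : ℕ, 1 ≤ n → ∀ z : ℂ, ‖z‖ ≤ r₀ → ‖f^[n] z‖ ≤ r₀⁻¹ * c₀ ^ n * ‖z‖ := by
  have hsub : closedBall (0 : ℂ) (1 / 2) ⊆ ball 0 1 := closedBall_subset_ball (by norm_num)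
  have hg : ContinuousOn (dslope f 0) (ball (0 : ℂ) 1) :=
    ((differentiableOn_dslope (isOpen_ball.mem_nhds (mem_ball_self one_pos))).mpr hd).continuousOn
  obtain ⟨c, hc0, hc1, hc⟩ :=
    (isCompact_closedBall (0 : ℂ) (1 / 2)).exists_pos_lt_one_forall_norm_le (hg.mono hsub)
      fun z hz => norm_dslope_lt_one_of_not_isRotation hd hm hf0 hrot (hsub hz)
  have hstep : ∀ z : ℂ, ‖z‖ ≤ 1 / 2 → ‖f z‖ ≤ c * ‖z‖ := fun z hz =>
    norm_le_mul_norm_of_norm_dslope_le hf0 (hc z (mem_closedBall_zero_iff.mpr hz))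
  refine ⟨1 / 2, c, by norm_num, by norm_num, hc0, hc1, fun n _ z hz => ?_⟩
  calc ‖f^[n] z‖ ≤ c ^ n * ‖z‖ := norm_iterate_le_pow_mul_norm hc0.le hc1.le hstep n hz
    _ ≤ (1 / 2 : ℝ)⁻¹ * c ^ n * ‖z‖ := by
      rw [mul_assoc]
      exact le_mul_of_one_le_left (by positivity) (by norm_num)

end
end

section
/- Let f be an inner function with f(0)=0 which is not a rotation, and let (a_n) be a bounded sequence of complex numbers. Then the series F(z) = ∑_{n=1}^∞ a_n f^n(z) converges for every z ∈ 𝔻 and defines a function in the Bloch space, and there exists a constant C = C(f) > 0 such that ‖F‖_ℬ = sup_{z∈𝔻} (1−|z|²)|F'(z)| ≤ C · sup_{n≥1} |a_n|. -/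
open MeasureTheory Complex Metric Set Filter Topology

noncomputable section

/-!
Write `f z = z g z` with `g = dslope f 0`. As `f` is not a rotation, the equality case of
Schwarz's lemma gives `‖g‖ < 1` on `𝔻`. Hence `f` contracts each disc `‖z‖ ≤ r < 1` by a
factor `q(r) < 1`, which makes `∑ aₙ fⁿ` converge locally uniformly, so that it may be
differentiated termwise; and Schwarz–Pick for `g` gives `1 - ‖f w‖² ≥ μ (1 - ‖w‖²)` with
`μ > 1` outside any disc `‖w‖ < ρ`.

Schwarz–Pick for `fⁿ` bounds `(1 - ‖z‖²) ‖(fⁿ)' z‖` by `1 - ‖fⁿ z‖²`. Until the orbit of `z`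
enters the disc `‖w‖ < ρ` on which `‖f'‖ ≤ k < 1`, say at time `N`, the quantity
`1 - ‖fⁿ z‖² ≤ 1` grows by the factor `μ` at each step, so the terms with `n < N` are at most
`μ^(n - N + 1)`; after time `N` the orbit stays in that disc and the terms are at most
`k^(n - N)`. Both geometric sums are bounded independently of `z`.
-/

open ComplexConjugate

def moebius (b z : ℂ) : ℂ := (b - z) / (1 - conj b * z)

section Moebius

variable {b z : ℂ}

@[simp] lemma moebius_self (b : ℂ) : moebius b b = 0 := by simp [moebius]

@[simp] lemma moebius_zero (b : ℂ) : moebius b 0 = b := by simp [moebius]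

lemma norm_one_sub_conj_mul_sq_sub_norm_sub_sq (b z : ℂ) :
    ‖1 - conj b * z‖ ^ 2 - ‖b - z‖ ^ 2 = (1 - ‖b‖ ^ 2) * (1 - ‖z‖ ^ 2) := by
  simp only [Complex.sq_norm, Complex.normSq_apply, Complex.sub_re, Complex.sub_im,
    Complex.mul_re, Complex.mul_im, Complex.one_re, Complex.one_im, Complex.conj_re,
    Complex.conj_im]
  ring

lemma one_sub_conj_mul_ne_zero_s18 (hb : ‖b‖ < 1) (hz : ‖z‖ < 1) : 1 - conj b * z ≠ 0 := by
  have h : ‖conj b * z‖ < 1 := by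
    rw [norm_mul, RCLike.norm_conj]
    nlinarith [norm_nonneg b, norm_nonneg z]
  exact sub_ne_zero.2 fun h1 => by rw [← h1, norm_one] at h; exact lt_irrefl _ h

lemma one_sub_norm_moebius_sq (hb : ‖b‖ < 1) (hz : ‖z‖ < 1) :
    1 - ‖moebius b z‖ ^ 2 = (1 - ‖b‖ ^ 2) * (1 - ‖z‖ ^ 2) / ‖1 - conj b * z‖ ^ 2 := by
  have hd : ‖1 - conj b * z‖ ≠ 0 := norm_ne_zero_iff.2 (one_sub_conj_mul_ne_zero_s18 hb hz)
  rw [moebius, norm_div, div_pow, ← norm_one_sub_conj_mul_sq_sub_norm_sub_sq,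
    one_sub_div (pow_ne_zero 2 hd)]

lemma norm_moebius_lt_one (hb : ‖b‖ < 1) (hz : ‖z‖ < 1) : ‖moebius b z‖ < 1 := by
  have hpos : 0 < 1 - ‖moebius b z‖ ^ 2 := by
    rw [one_sub_norm_moebius_sq hb hz]
    have : 0 < 1 - ‖b‖ ^ 2 := by nlinarith [norm_nonneg b]
    have : 0 < 1 - ‖z‖ ^ 2 := by nlinarith [norm_nonneg z]
    have : 0 < ‖1 - conj b * z‖ := norm_pos_iff.2 (one_sub_conj_mul_ne_zero_s18 hb hz)
    positivity
  nlinarith [norm_nonneg (moebius b z)]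

lemma mapsTo_moebius (hb : ‖b‖ < 1) : MapsTo (moebius b) (ball 0 1) (ball 0 1) := fun _ hz =>
  mem_ball_zero_iff.2 (norm_moebius_lt_one hb (mem_ball_zero_iff.1 hz))

lemma hasDerivAt_moebius (h : 1 - conj b * z ≠ 0) :
    HasDerivAt (moebius b) ((conj b * b - 1) / (1 - conj b * z) ^ 2) z := by
  have hnum : HasDerivAt (fun z => b - z) (-1) z := (hasDerivAt_id z).const_sub b
  have hden : HasDerivAt (fun z => 1 - conj b * z) (-(conj b * 1)) z :=
    ((hasDerivAt_id z).const_mul (conj b)).const_sub 1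
  rw [show conj b * b - 1 = -1 * (1 - conj b * z) - (b - z) * -(conj b * 1) by ring]
  exact hnum.div hden h

lemma differentiableOn_moebius (hb : ‖b‖ < 1) : DifferentiableOn ℂ (moebius b) (ball 0 1) :=
  fun _ hz => (hasDerivAt_moebius (one_sub_conj_mul_ne_zero_s18 hb
    (mem_ball_zero_iff.1 hz))).differentiableAt.differentiableWithinAt

lemma norm_conj_mul_self_sub_one (hb : ‖b‖ ≤ 1) : ‖conj b * b - 1‖ = 1 - ‖b‖ ^ 2 := by
  rw [Complex.conj_mul', ← Complex.ofReal_pow, ← Complex.ofReal_one, ← Complex.ofReal_sub,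
    Complex.norm_real, Real.norm_eq_abs, abs_of_nonpos (by nlinarith [norm_nonneg b])]
  ring

lemma norm_deriv_moebius (hb : ‖b‖ < 1) (hz : ‖z‖ < 1) :
    ‖deriv (moebius b) z‖ = (1 - ‖b‖ ^ 2) / ‖1 - conj b * z‖ ^ 2 := by
  rw [(hasDerivAt_moebius (one_sub_conj_mul_ne_zero_s18 hb hz)).deriv, norm_div, norm_pow,
    norm_conj_mul_self_sub_one hb.le]

lemma norm_deriv_moebius_zero (hb : ‖b‖ < 1) : ‖deriv (moebius b) 0‖ = 1 - ‖b‖ ^ 2 := by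
  simpa using norm_deriv_moebius hb (z := 0) (by simp)

lemma norm_deriv_moebius_self (hb : ‖b‖ < 1) : ‖deriv (moebius b) b‖ = (1 - ‖b‖ ^ 2)⁻¹ := by
  have hpos : 0 < 1 - ‖b‖ ^ 2 := by nlinarith [norm_nonneg b]
  rw [norm_deriv_moebius hb hb, norm_sub_rev, norm_conj_mul_self_sub_one hb.le]
  field_simp

end Moebius

section SchwarzPick

variable {h : ℂ → ℂ}

lemma norm_moebius_apply_zero_le (hd : DifferentiableOn ℂ h (ball 0 1))
    (hm : MapsTo h (ball 0 1) (ball 0 1)) {w : ℂ} (hw : ‖w‖ < 1) :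
    ‖moebius (h 0) (h w)‖ ≤ ‖w‖ := by
  have h0 : ‖h 0‖ < 1 := mem_ball_zero_iff.1 (hm (mem_ball_self one_pos))
  exact Complex.norm_le_norm_of_mapsTo_ball (f := fun y => moebius (h 0) (h y))
    ((differentiableOn_moebius h0).comp hd hm)
    (((mapsTo_moebius h0).comp hm).mono_right ball_subset_closedBall) (moebius_self _) hw

lemma mul_one_sub_norm_sq_le_one_sub_norm_apply_sq (hd : DifferentiableOn ℂ h (ball 0 1))
    (hm : MapsTo h (ball 0 1) (ball 0 1)) {w : ℂ} (hw : ‖w‖ < 1) :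
    (1 - ‖h 0‖) / (1 + ‖h 0‖) * (1 - ‖w‖ ^ 2) ≤ 1 - ‖h w‖ ^ 2 := by
  have hb : ‖h 0‖ < 1 := mem_ball_zero_iff.1 (hm (mem_ball_self one_pos))
  have hu : ‖h w‖ < 1 := mem_ball_zero_iff.1 (hm (mem_ball_zero_iff.2 hw))
  have hden : 1 - ‖h 0‖ ≤ ‖1 - conj (h 0) * h w‖ := by
    have h1 : ‖conj (h 0) * h w‖ ≤ ‖h 0‖ := by
      rw [norm_mul, RCLike.norm_conj]
      exact mul_le_of_le_one_right (norm_nonneg _) hu.le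
    have h2 := norm_sub_norm_le (1 : ℂ) (conj (h 0) * h w)
    rw [norm_one] at h2
    linarith
  have hpick : 1 - ‖w‖ ^ 2 ≤ 1 - ‖moebius (h 0) (h w)‖ ^ 2 := by
    have := norm_moebius_apply_zero_le hd hm hw
    nlinarith [norm_nonneg (moebius (h 0) (h w))]
  rw [one_sub_norm_moebius_sq hb hu,
    le_div_iff₀ (pow_pos (norm_pos_iff.2 (one_sub_conj_mul_ne_zero_s18 hb hu)) 2)] at hpick
  have hw2 : 0 ≤ 1 - ‖w‖ ^ 2 := by nlinarith [norm_nonneg w]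
  have hb1 : 0 < 1 - ‖h 0‖ := by linarith
  have key : (1 - ‖h 0‖) * ((1 - ‖h 0‖) * (1 - ‖w‖ ^ 2))
      ≤ (1 - ‖h 0‖) * ((1 - ‖h w‖ ^ 2) * (1 + ‖h 0‖)) := by
    nlinarith [mul_le_mul_of_nonneg_left (pow_le_pow_left₀ hb1.le hden 2) hw2]
  rw [div_mul_eq_mul_div, div_le_iff₀ (by positivity)]
  exact le_of_mul_le_mul_left key hb1

lemma one_sub_norm_sq_mul_norm_deriv_le (hd : DifferentiableOn ℂ h (ball 0 1))
    (hm : MapsTo h (ball 0 1) (ball 0 1)) {w : ℂ} (hw : ‖w‖ < 1) :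
    (1 - ‖w‖ ^ 2) * ‖deriv h w‖ ≤ 1 - ‖h w‖ ^ 2 := by
  have hu : ‖h w‖ < 1 := mem_ball_zero_iff.1 (hm (mem_ball_zero_iff.2 hw))
  set φ := moebius (h w) ∘ h ∘ moebius w
  have hφd : DifferentiableOn ℂ φ (ball 0 1) :=
    (differentiableOn_moebius hu).comp (hd.comp (differentiableOn_moebius hw)
      (mapsTo_moebius hw)) (hm.comp (mapsTo_moebius hw))
  have hφm : MapsTo φ (ball 0 1) (closedBall (φ 0) 1) := by
    simpa [φ] using ((mapsTo_moebius hu).comp (hm.comp (mapsTo_moebius hw))).mono_right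
      ball_subset_closedBall
  have hφ' : deriv φ 0 = deriv (moebius (h w)) (h w) * (deriv h w * deriv (moebius w) 0) := by
    have hdm : ∀ {b z : ℂ}, ‖b‖ < 1 → ‖z‖ < 1 → DifferentiableAt ℂ (moebius b) z :=
      fun hb hz => (hasDerivAt_moebius (one_sub_conj_mul_ne_zero_s18 hb hz)).differentiableAt
    have hdh : DifferentiableAt ℂ h (moebius w 0) := by
      simpa using hd.differentiableAt (isOpen_ball.mem_nhds (mem_ball_zero_iff.2 hw))
    have hdm₀ : DifferentiableAt ℂ (moebius w) 0 := hdm hw (by simp)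
    rw [deriv_comp _ (by simpa using hdm hu hu) (hdh.comp _ hdm₀), deriv_comp _ hdh hdm₀]
    simp
  have hschwarz := Complex.norm_deriv_le_one_of_mapsTo_ball hφd hφm one_pos
  have hpos : 0 < 1 - ‖h w‖ ^ 2 := by nlinarith [norm_nonneg (h w)]
  rw [hφ', norm_mul, norm_mul, norm_deriv_moebius_self hu, norm_deriv_moebius_zero hw,
    inv_mul_le_iff₀ hpos, mul_one] at hschwarz
  linarith

end SchwarzPick

lemma norm_iterate_le_pow_mul_s18 {E : Type*} [SeminormedAddCommGroup E] {f : E → E} {q r : ℝ}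
    (hq0 : 0 ≤ q) (hq1 : q ≤ 1) (hf : ∀ w, ‖w‖ ≤ r → ‖f w‖ ≤ q * ‖w‖) (n : ℕ) {w : E}
    (hw : ‖w‖ ≤ r) : ‖f^[n] w‖ ≤ q ^ n * ‖w‖ := by
  induction n with
  | zero => simp
  | succ n ih =>
    have hqn : q ^ n * ‖w‖ ≤ ‖w‖ := mul_le_of_le_one_left (norm_nonneg w) (pow_le_one₀ hq0 hq1)
    rw [Function.iterate_succ_apply', pow_succ', mul_assoc]
    exact (hf _ (ih.trans (hqn.trans hw))).trans (mul_le_mul_of_nonneg_left ih hq0)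

lemma norm_deriv_iterate_le_pow {𝕜 : Type*} [NontriviallyNormedField 𝕜] {f : 𝕜 → 𝕜}
    {s : Set 𝕜} {k : ℝ} (hs : IsOpen s) (hd : DifferentiableOn 𝕜 f s) (hm : MapsTo f s s)
    (hk : ∀ w ∈ s, ‖deriv f w‖ ≤ k) (n : ℕ) {w : 𝕜} (hw : w ∈ s) : ‖deriv f^[n] w‖ ≤ k ^ n := by
  induction n generalizing w with
  | zero => simp
  | succ n ih =>
    rw [Function.iterate_succ, deriv_comp _ ((hd.iterate hm n).differentiableAt
      (hs.mem_nhds (hm hw))) (hd.differentiableAt (hs.mem_nhds hw)), norm_mul, pow_succ]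
    exact mul_le_mul (ih (hm hw)) (hk w hw) (norm_nonneg _) ((norm_nonneg _).trans (ih (hm hw)))

lemma pow_mul_le_of_mul_le_succ {s : ℕ → ℝ} {c : ℝ} (hc : 0 ≤ c) {n N : ℕ} (hnN : n ≤ N)
    (hs : ∀ j, n ≤ j → j < N → c * s j ≤ s (j + 1)) : c ^ (N - n) * s n ≤ s N := by
  induction N, hnN using Nat.le_induction with
  | base => simp
  | succ N hnN ih =>
    rw [Nat.sub_add_comm hnN, pow_succ', mul_assoc]
    exact (mul_le_mul_of_nonneg_left (ih fun j hj hjN => hs j hj (by omega)) hc).trans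
      (hs N hnN (by omega))

section SelfMap

variable {f : ℂ → ℂ}

lemma norm_dslope_lt_one (hd : DifferentiableOn ℂ f (ball 0 1))
    (hm : MapsTo f (ball 0 1) (ball 0 1)) (hf0 : f 0 = 0) (hrot : ¬ IsRotation f) {w : ℂ}
    (hw : ‖w‖ < 1) : ‖dslope f 0 w‖ < 1 := by
  have hmaps : MapsTo f (ball 0 1) (closedBall (f 0) 1) := by
    rw [hf0]; exact hm.mono_right ball_subset_closedBall
  have hw' : w ∈ ball (0 : ℂ) 1 := mem_ball_zero_iff.2 hw
  refine ((Complex.norm_dslope_le_div_of_mapsTo_ball hd hmaps hw').trans_eq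
    (div_one 1)).lt_of_ne fun heq => hrot ⟨dslope f 0 w, heq, fun z hz => ?_⟩
  simpa [hf0, mul_comm] using
    Complex.affine_of_mapsTo_ball_of_norm_dslope_eq_div hd hmaps hw' (by rw [heq, div_one]) hz

lemma apply_eq_mul_dslope (hf0 : f 0 = 0) (w : ℂ) : f w = w * dslope f 0 w := by
  simpa [hf0] using (sub_smul_dslope f 0 w).symm

lemma exists_norm_iterate_le_pow_mul (hd : DifferentiableOn ℂ f (ball 0 1))
    (hm : MapsTo f (ball 0 1) (ball 0 1)) (hf0 : f 0 = 0) (hrot : ¬ IsRotation f) {r : ℝ}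
    (hr0 : 0 ≤ r) (hr : r < 1) :
    ∃ q, 0 ≤ q ∧ q < 1 ∧ ∀ n w, ‖w‖ ≤ r → ‖f^[n] w‖ ≤ q ^ n * ‖w‖ := by
  have hsub : closedBall (0 : ℂ) r ⊆ ball 0 1 := closedBall_subset_ball hr
  have hcont : ContinuousOn (fun w => ‖dslope f 0 w‖) (closedBall 0 r) :=
    (((Complex.differentiableOn_dslope (isOpen_ball.mem_nhds (mem_ball_self one_pos))).2
      hd).continuousOn.mono hsub).norm
  obtain ⟨w₀, hw₀, hmax⟩ := (isCompact_closedBall 0 r).exists_isMaxOn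
    (nonempty_closedBall.2 hr0) hcont
  have hq1 : ‖dslope f 0 w₀‖ < 1 :=
    norm_dslope_lt_one hd hm hf0 hrot (mem_ball_zero_iff.1 (hsub hw₀))
  refine ⟨_, norm_nonneg _, hq1, fun n w hw => norm_iterate_le_pow_mul_s18 (norm_nonneg _) hq1.le
    (fun v hv => ?_) n hw⟩
  rw [apply_eq_mul_dslope hf0, norm_mul, mul_comm]
  exact mul_le_mul_of_nonneg_right (hmax (mem_closedBall_zero_iff.2 hv)) (norm_nonneg v)

lemma exists_one_lt_mul_one_sub_norm_sq_le (hd : DifferentiableOn ℂ f (ball 0 1))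
    (hm : MapsTo f (ball 0 1) (ball 0 1)) (hf0 : f 0 = 0) (hrot : ¬ IsRotation f) {ρ : ℝ}
    (hρ : 0 < ρ) :
    ∃ μ, 1 < μ ∧ ∀ w, ‖w‖ < 1 → ρ ≤ ‖w‖ → μ * (1 - ‖w‖ ^ 2) ≤ 1 - ‖f w‖ ^ 2 := by
  set g := dslope f 0
  have hgd : DifferentiableOn ℂ g (ball 0 1) :=
    (Complex.differentiableOn_dslope (isOpen_ball.mem_nhds (mem_ball_self one_pos))).2 hd
  have hgm : MapsTo g (ball 0 1) (ball 0 1) := fun w hw =>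
    mem_ball_zero_iff.2 (norm_dslope_lt_one hd hm hf0 hrot (mem_ball_zero_iff.1 hw))
  have hg0 : ‖g 0‖ < 1 := norm_dslope_lt_one hd hm hf0 hrot (by simp)
  set c := (1 - ‖g 0‖) / (1 + ‖g 0‖)
  have hc : 0 < c := div_pos (by linarith) (by positivity)
  refine ⟨1 + c * ρ ^ 2, by nlinarith [pow_pos hρ 2], fun w hw hρw => ?_⟩
  have hharnack : c * (1 - ‖w‖ ^ 2) ≤ 1 - ‖g w‖ ^ 2 :=
    mul_one_sub_norm_sq_le_one_sub_norm_apply_sq hgd hgm hw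
  have hw2 : 0 ≤ 1 - ‖w‖ ^ 2 := by nlinarith [norm_nonneg w]
  have hρw2 : 0 ≤ ‖w‖ ^ 2 - ρ ^ 2 := by nlinarith
  rw [apply_eq_mul_dslope hf0, norm_mul, mul_pow]
  nlinarith [mul_le_mul_of_nonneg_left hharnack (sq_nonneg ‖w‖),
    mul_nonneg hρw2 (mul_nonneg hc.le hw2)]

lemma exists_norm_deriv_le_lt_one (hd : DifferentiableOn ℂ f (ball 0 1))
    (hm : MapsTo f (ball 0 1) (ball 0 1)) (hf0 : f 0 = 0) (hrot : ¬ IsRotation f) :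
    ∃ ρ, 0 < ρ ∧ ρ ≤ 1 ∧ ∃ k, 0 ≤ k ∧ k < 1 ∧ ∀ w ∈ ball (0 : ℂ) ρ, ‖deriv f w‖ ≤ k := by
  have h0 : ‖deriv f 0‖ < 1 := by
    simpa using norm_dslope_lt_one hd hm hf0 hrot (w := 0) (by simp)
  have hcont : ContinuousAt (deriv f) 0 :=
    (hd.deriv isOpen_ball).continuousOn.continuousAt
      (isOpen_ball.mem_nhds (mem_ball_self one_pos))
  obtain ⟨ε, hε, hball⟩ := Metric.eventually_nhds_iff_ball.1
    (hcont.norm.eventually (gt_mem_nhds (show ‖deriv f 0‖ < (1 + ‖deriv f 0‖) / 2 by linarith)))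
  exact ⟨min ε 1, lt_min hε one_pos, min_le_right _ _, _, by positivity, by linarith,
    fun w hw => (hball w (ball_subset_ball (min_le_left _ _) hw)).le⟩

end SelfMap

lemma geom_sum_le_inv_one_sub {x : ℝ} (hx0 : 0 ≤ x) (hx1 : x < 1) (n : ℕ) :
    ∑ i ∈ Finset.range n, x ^ i ≤ (1 - x)⁻¹ := by
  have h := geom_sum_Ico_le_of_lt_one (m := 0) (n := n) hx0 hx1
  rwa [pow_zero, one_div, ← Finset.range_eq_Ico] at h

section Bloch

variable {f : ℂ → ℂ}

lemma exists_first_norm_iterate_lt (hm : MapsTo f (ball 0 1) (ball 0 1)) {ρ μ : ℝ} (hμ : 1 < μ)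
    (hexp : ∀ w, ‖w‖ < 1 → ρ ≤ ‖w‖ → μ * (1 - ‖w‖ ^ 2) ≤ 1 - ‖f w‖ ^ 2) {z : ℂ}
    (hz : ‖z‖ < 1) : ∃ N, ‖f^[N] z‖ < ρ ∧ ∀ j < N, ρ ≤ ‖f^[j] z‖ := by
  classical
  have horbit : ∀ n, ‖f^[n] z‖ < 1 := fun n =>
    mem_ball_zero_iff.1 (hm.iterate n (mem_ball_zero_iff.2 hz))
  have hex : ∃ n, ‖f^[n] z‖ < ρ := by
    by_contra! hfar
    have hz2 : 0 < 1 - ‖z‖ ^ 2 := by nlinarith [norm_nonneg z]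
    obtain ⟨n, hn⟩ := pow_unbounded_of_one_lt (1 - ‖z‖ ^ 2)⁻¹ hμ
    have hgrow := pow_mul_le_of_mul_le_succ (s := fun n => 1 - ‖f^[n] z‖ ^ 2) (c := μ)
      (by linarith) (Nat.zero_le n) fun j _ _ => by
        simpa [Function.iterate_succ_apply'] using hexp _ (horbit j) (hfar j)
    rw [inv_lt_iff_one_lt_mul₀ hz2] at hn
    simp only [Function.iterate_zero, id_eq, Nat.sub_zero] at hgrow
    nlinarith [sq_nonneg ‖f^[n] z‖]
  exact ⟨Nat.find hex, Nat.find_spec hex, fun j hj => not_lt.1 (Nat.find_min hex hj)⟩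

lemma one_sub_norm_sq_mul_norm_deriv_iterate_add_le (hd : DifferentiableOn ℂ f (ball 0 1))
    (hm : MapsTo f (ball 0 1) (ball 0 1)) (hf0 : f 0 = 0) {ρ k : ℝ} (hρ1 : ρ ≤ 1)
    (hk : ∀ w ∈ ball (0 : ℂ) ρ, ‖deriv f w‖ ≤ k) {z : ℂ} (hz : ‖z‖ < 1) {N : ℕ}
    (hN : ‖f^[N] z‖ < ρ) (m : ℕ) : (1 - ‖z‖ ^ 2) * ‖deriv f^[N + m] z‖ ≤ k ^ m := by
  have hsub : ball (0 : ℂ) ρ ⊆ ball 0 1 := ball_subset_ball hρ1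
  have hmρ : MapsTo f (ball 0 ρ) (ball 0 ρ) := fun w hw => mem_ball_zero_iff.2
    ((Complex.norm_le_norm_of_mapsTo_ball hd (hm.mono_right ball_subset_closedBall) hf0
      (mem_ball_zero_iff.1 (hsub hw))).trans_lt (mem_ball_zero_iff.1 hw))
  have hz' : z ∈ ball (0 : ℂ) 1 := mem_ball_zero_iff.2 hz
  have htail : ‖deriv f^[m] (f^[N] z)‖ ≤ k ^ m :=
    norm_deriv_iterate_le_pow isOpen_ball (hd.mono hsub) hmρ hk m (mem_ball_zero_iff.2 hN)
  have hz2 : 0 ≤ 1 - ‖z‖ ^ 2 := by nlinarith [norm_nonneg z]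
  have hhead : (1 - ‖z‖ ^ 2) * ‖deriv f^[N] z‖ ≤ 1 :=
    (one_sub_norm_sq_mul_norm_deriv_le (hd.iterate hm N) (hm.iterate N) hz).trans
      (by nlinarith [sq_nonneg ‖f^[N] z‖])
  rw [add_comm, Function.iterate_add, deriv_comp _ ((hd.iterate hm m).differentiableAt
    (isOpen_ball.mem_nhds (hm.iterate N hz'))) ((hd.iterate hm N).differentiableAt
    (isOpen_ball.mem_nhds hz')), norm_mul, mul_left_comm]
  simpa using
    mul_le_mul htail hhead (mul_nonneg hz2 (norm_nonneg _)) ((norm_nonneg _).trans htail)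

theorem exists_sum_range_one_sub_norm_sq_mul_norm_deriv_iterate_le
    (hd : DifferentiableOn ℂ f (ball 0 1)) (hm : MapsTo f (ball 0 1) (ball 0 1))
    (hf0 : f 0 = 0) (hrot : ¬ IsRotation f) :
    ∃ C, 0 < C ∧ ∀ z, ‖z‖ < 1 → ∀ M,
      ∑ n ∈ Finset.range M, (1 - ‖z‖ ^ 2) * ‖deriv f^[n] z‖ ≤ C := by
  obtain ⟨ρ, hρ, hρ1, k, hk0, hk1, hk⟩ := exists_norm_deriv_le_lt_one hd hm hf0 hrot
  obtain ⟨μ, hμ, hexp⟩ := exists_one_lt_mul_one_sub_norm_sq_le hd hm hf0 hrot hρ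
  have hμ1 : μ⁻¹ < 1 := inv_lt_one_of_one_lt₀ hμ
  have hμ0 : 0 ≤ μ⁻¹ := inv_nonneg.2 (by linarith)
  refine ⟨(1 - μ⁻¹)⁻¹ + (1 - k)⁻¹, add_pos (inv_pos.2 (by linarith)) (inv_pos.2 (by linarith)),
    fun z hz M => ?_⟩
  obtain ⟨N, hN, hfar⟩ := exists_first_norm_iterate_lt hm hμ hexp hz
  have hz2 : 0 ≤ 1 - ‖z‖ ^ 2 := by nlinarith [norm_nonneg z]
  have hpick n : (1 - ‖z‖ ^ 2) * ‖deriv f^[n] z‖ ≤ 1 - ‖f^[n] z‖ ^ 2 :=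
    one_sub_norm_sq_mul_norm_deriv_le (hd.iterate hm n) (hm.iterate n) hz
  have hhead : ∀ n ∈ Finset.range N, (1 - ‖z‖ ^ 2) * ‖deriv f^[n] z‖ ≤ μ⁻¹ ^ (N - 1 - n) := by
    intro n hn
    have hn : n < N := Finset.mem_range.1 hn
    have hgrow := pow_mul_le_of_mul_le_succ (s := fun n => 1 - ‖f^[n] z‖ ^ 2) (c := μ)
      (by linarith) hn.le fun j _ hj => by
        simpa [Function.iterate_succ_apply'] using
          hexp _ (mem_ball_zero_iff.1 (hm.iterate j (mem_ball_zero_iff.2 hz))) (hfar j hj)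
    have hs : 1 - ‖f^[n] z‖ ^ 2 ≤ μ⁻¹ ^ (N - n) := by
      rw [inv_pow, ← one_div, le_div_iff₀ (pow_pos (by linarith) _), mul_comm]
      linarith [sq_nonneg ‖f^[N] z‖]
    exact ((hpick n).trans hs).trans (pow_le_pow_of_le_one hμ0 hμ1.le (by omega))
  calc ∑ n ∈ Finset.range M, (1 - ‖z‖ ^ 2) * ‖deriv f^[n] z‖
      ≤ ∑ n ∈ Finset.range (N + M), (1 - ‖z‖ ^ 2) * ‖deriv f^[n] z‖ :=
        Finset.sum_le_sum_of_subset_of_nonneg (Finset.range_mono (by omega))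
          fun n _ _ => mul_nonneg hz2 (norm_nonneg _)
    _ = ∑ n ∈ Finset.range N, (1 - ‖z‖ ^ 2) * ‖deriv f^[n] z‖
          + ∑ m ∈ Finset.range M, (1 - ‖z‖ ^ 2) * ‖deriv f^[N + m] z‖ :=
        Finset.sum_range_add _ N M
    _ ≤ ∑ n ∈ Finset.range N, μ⁻¹ ^ (N - 1 - n) + ∑ m ∈ Finset.range M, k ^ m :=
        add_le_add (Finset.sum_le_sum hhead) (Finset.sum_le_sum fun m _ =>
          one_sub_norm_sq_mul_norm_deriv_iterate_add_le hd hm hf0 hρ1 hk hz hN m)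
    _ ≤ (1 - μ⁻¹)⁻¹ + (1 - k)⁻¹ := by
        rw [Finset.sum_range_reflect (fun n => μ⁻¹ ^ n) N]
        exact add_le_add (geom_sum_le_inv_one_sub hμ0 hμ1 N) (geom_sum_le_inv_one_sub hk0 hk1 M)

end Bloch

section Series

variable {f : ℂ → ℂ} {a : ℕ → ℂ} {A : ℝ}

lemma exists_summable_bound_iterate_terms (hd : DifferentiableOn ℂ f (ball 0 1))
    (hm : MapsTo f (ball 0 1) (ball 0 1)) (hf0 : f 0 = 0) (hrot : ¬ IsRotation f)
    (ha : ∀ n, ‖a (n + 1)‖ ≤ A) {r : ℝ} (hr0 : 0 ≤ r) (hr : r < 1) :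
    ∃ u : ℕ → ℝ, Summable u ∧ ∀ n w, ‖w‖ ≤ r → ‖a (n + 1) * f^[n + 1] w‖ ≤ u n := by
  obtain ⟨q, hq0, hq1, hq⟩ := exists_norm_iterate_le_pow_mul hd hm hf0 hrot hr0 hr
  have hA : 0 ≤ A := (norm_nonneg _).trans (ha 0)
  refine ⟨fun n => A * (q ^ (n + 1) * r),
    (((summable_nat_add_iff 1).2 (summable_geometric_of_lt_one hq0 hq1)).mul_right r).mul_left A,
    fun n w hw => ?_⟩
  rw [norm_mul]
  exact mul_le_mul (ha n) ((hq _ w hw).trans (mul_le_mul_of_nonneg_left hw (pow_nonneg hq0 _)))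
    (norm_nonneg _) hA

lemma summable_iterate_terms (hd : DifferentiableOn ℂ f (ball 0 1))
    (hm : MapsTo f (ball 0 1) (ball 0 1)) (hf0 : f 0 = 0) (hrot : ¬ IsRotation f)
    (ha : ∀ n, ‖a (n + 1)‖ ≤ A) {z : ℂ} (hz : ‖z‖ < 1) :
    Summable fun n => a (n + 1) * f^[n + 1] z := by
  obtain ⟨u, hu, hbound⟩ :=
    exists_summable_bound_iterate_terms hd hm hf0 hrot ha (norm_nonneg z) hz
  exact hu.of_norm_bounded fun n => hbound n z le_rfl

lemma hasSum_deriv_seriesFun (hd : DifferentiableOn ℂ f (ball 0 1))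
    (hm : MapsTo f (ball 0 1) (ball 0 1)) (hf0 : f 0 = 0) (hrot : ¬ IsRotation f)
    (ha : ∀ n, ‖a (n + 1)‖ ≤ A) {z : ℂ} (hz : ‖z‖ < 1) :
    HasSum (fun n => a (n + 1) * deriv f^[n + 1] z) (deriv (seriesFun f a) z) := by
  obtain ⟨r, hzr, hr1⟩ := exists_between hz
  obtain ⟨u, hu, hbound⟩ :=
    exists_summable_bound_iterate_terms hd hm hf0 hrot ha ((norm_nonneg z).trans hzr.le) hr1
  have hdiff n : DifferentiableOn ℂ (fun w => a (n + 1) * f^[n + 1] w) (ball 0 r) :=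
    ((hd.iterate hm (n + 1)).mono (ball_subset_ball hr1.le)).const_mul _
  have h := Complex.hasSum_deriv_of_summable_norm hu hdiff isOpen_ball
    (fun n w hw => hbound n w (mem_ball_zero_iff.1 hw).le) (mem_ball_zero_iff.2 hzr)
  simp only [deriv_const_mul_field] at h
  exact h

lemma one_sub_norm_sq_mul_norm_deriv_seriesFun_le (hd : DifferentiableOn ℂ f (ball 0 1))
    (hm : MapsTo f (ball 0 1) (ball 0 1)) (hf0 : f 0 = 0) (hrot : ¬ IsRotation f)
    (ha : ∀ n, ‖a (n + 1)‖ ≤ A) {z : ℂ} (hz : ‖z‖ < 1) {C : ℝ}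
    (hC : ∀ M, ∑ n ∈ Finset.range M, (1 - ‖z‖ ^ 2) * ‖deriv f^[n] z‖ ≤ C) :
    (1 - ‖z‖ ^ 2) * ‖deriv (seriesFun f a) z‖ ≤ C * A := by
  have hz2 : 0 ≤ 1 - ‖z‖ ^ 2 := by nlinarith [norm_nonneg z]
  have hA : 0 ≤ A := (norm_nonneg _).trans (ha 0)
  refine le_of_tendsto' (((hasSum_deriv_seriesFun hd hm hf0 hrot ha hz).tendsto_sum_nat.norm
    ).const_mul _) fun M => ?_
  calc (1 - ‖z‖ ^ 2) * ‖∑ n ∈ Finset.range M, a (n + 1) * deriv f^[n + 1] z‖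
      ≤ ∑ n ∈ Finset.range M, A * ((1 - ‖z‖ ^ 2) * ‖deriv f^[n + 1] z‖) := by
        refine (mul_le_mul_of_nonneg_left (norm_sum_le _ _) hz2).trans ?_
        rw [Finset.mul_sum]
        refine Finset.sum_le_sum fun n _ => ?_
        rw [norm_mul, mul_left_comm]
        exact mul_le_mul_of_nonneg_right (ha n) (mul_nonneg hz2 (norm_nonneg _))
    _ ≤ A * ∑ n ∈ Finset.range (M + 1), (1 - ‖z‖ ^ 2) * ‖deriv f^[n] z‖ := by
        rw [← Finset.mul_sum, Finset.sum_range_succ' _ M]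
        exact mul_le_mul_of_nonneg_left (le_add_of_nonneg_right (by simpa using hz2)) hA
    _ ≤ C * A := by rw [mul_comm]; exact mul_le_mul_of_nonneg_right (hC M.succ) hA

end Series

/-- **Theorem 4.3.** If `(aₙ)` is bounded then `F = ∑ aₙ fⁿ` converges on `𝔻` and belongs
to the Bloch space, with `‖F‖_ℬ ≤ C sup |aₙ|` for a constant `C = C(f) > 0`. -/
theorem statement18 (f : ℂ → ℂ) (hf : IsInner f) (hf0 : f 0 = 0) (hrot : ¬ IsRotation f) :
    ∃ C : ℝ, 0 < C ∧ ∀ a : ℕ → ℂ, ∀ A : ℝ, (∀ n : ℕ, ‖a (n + 1)‖ ≤ A) →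
      (∀ z ∈ ball (0:ℂ) 1, Summable fun n : ℕ => a (n + 1) * f^[n + 1] z) ∧
      ∀ z ∈ ball (0:ℂ) 1, (1 - ‖z‖ ^ 2) * ‖deriv (seriesFun f a) z‖ ≤ C * A := by
  obtain ⟨hd, hm, -⟩ := hf
  obtain ⟨C, hC, hbloch⟩ :=
    exists_sum_range_one_sub_norm_sq_mul_norm_deriv_iterate_le hd hm hf0 hrot
  refine ⟨C, hC, fun a A ha => ⟨fun z hz => ?_, fun z hz => ?_⟩⟩
  · exact summable_iterate_terms hd hm hf0 hrot ha (mem_ball_zero_iff.1 hz)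
  · have hz : ‖z‖ < 1 := mem_ball_zero_iff.1 hz
    exact one_sub_norm_sq_mul_norm_deriv_seriesFun_le hd hm hf0 hrot ha hz (hbloch z hz)
end
end
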